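/- arXiv:1406.7535 — 2 statements merged into one kernel-verified Lean document; each statement's English description precedes it below -/
import Mathlib

section
/- Let c ≥ 2 and let P_1,...,P_c be partitions of an n-element set S (n ≥ 1). Then there exists a partition of S into m blocks with m < 2^{c-1}·n^{1 - 1/2^{c-1}} such that for every block B of this partition there is a permutation σ of {1,...,c} with P_{σ(1)}|_B refining P_{σ(2)}|_B, P_{σ(2)}|_B refining P_{σ(3)}|_B, and so on up to P_{σ(c-1)}|_B refining P_{σ(c)}|_B. -/
open Finset

/-- `P|_B` refines `P'|_B`: every nonempty part `Y ∩ B` of the restriction of `P` to `B` is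
contained in some part `Z ∩ B` of the restriction of `P'` to `B`. -/
def RestrRefines {α : Type*} [Fintype α] [DecidableEq α]
    (P P' : Finpartition (Finset.univ : Finset α)) (B : Finset α) : Prop :=
  ∀ Y ∈ P.parts, (Y ∩ B).Nonempty → ∃ Z ∈ P'.parts, Y ∩ B ⊆ Z ∩ B

/-!
Induct on `c`. Given a partition into blocks on which `P 1, …, P (c-1)` form a chain, split each
block `C` further so that `P 0` joins the chain on every new block `B`: either `B` lies inside one
part of `P 0` (so `P 0` can go last), or `P 0|_B` refines the first partition `Y` of the chain.
Inside `C`, the largest trace `w ∩ C` of a part of `P 0` is a block of the first kind, and picking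
in every `w ∩ C` its largest cell `w ∩ y ∩ C` (`y ∈ Y`) gives one of the second kind; their sizes
multiply to at least `#C`, so one of them has size at least `√#C`. Removing such blocks greedily
cuts `C` into at most `2√#C - 1` blocks, and Cauchy–Schwarz turns `r` blocks into at most
`2√(r n) - r`, which is how the exponent `1 - 1/2^(c-1)` arises.
-/

lemma Real.sum_sqrt_le_sqrt_card_mul_sum {ι : Type*} (s : Finset ι) {f : ι → ℝ}
    (hf : ∀ i, 0 ≤ f i) : ∑ i ∈ s, √(f i) ≤ √(#s * ∑ i ∈ s, f i) := by
  simpa [mul_comm] using Real.sum_sqrt_mul_sqrt_le s hf fun _ => zero_le_one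

lemma two_mul_sqrt_sub_add_one_le {m b : ℝ} (hm : 1 / 4 ≤ m) (hb : 0 ≤ b) (hmb : m ≤ b ^ 2) :
    2 * √(m - b) + 1 ≤ 2 * √m := by
  have hsqrt_le : √m ≤ b := Real.sqrt_le_iff.2 ⟨hb, hmb⟩
  have hhalf : 1 / 2 ≤ √m := (Real.le_sqrt' (by norm_num)).2 (by linarith)
  have : √(m - b) ≤ √m - 1 / 2 :=
    Real.sqrt_le_iff.2 ⟨by linarith, by nlinarith [Real.sq_sqrt (by linarith : 0 ≤ m)]⟩
  linarith

lemma two_mul_sqrt_mul_le_two_pow_succ_mul_rpow (d : ℕ) {N r : ℝ} (hN : 0 ≤ N)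
    (hr : r ≤ 2 ^ d * N ^ ((1 : ℝ) - 1 / 2 ^ d)) :
    2 * √(r * N) ≤ 2 ^ (d + 1) * N ^ ((1 : ℝ) - 1 / 2 ^ (d + 1)) := by
  have hexp : N ^ ((1 : ℝ) - 1 / 2 ^ d) * N = (N ^ ((1 : ℝ) - 1 / 2 ^ (d + 1))) ^ 2 := by
    have : (1 : ℝ) / 2 ^ d ≤ 1 := div_le_one_of_le₀ (one_le_pow₀ one_le_two) (by positivity)
    rw [← Real.rpow_add_one' hN (by linarith), ← Real.rpow_mul_natCast hN]
    congr 1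
    field_simp
    ring
  have hsqrt : √(2 ^ d : ℝ) ≤ 2 ^ d := by
    rw [Real.sqrt_le_left (by positivity)]
    exact le_self_pow₀ (one_le_pow₀ one_le_two) two_ne_zero
  calc 2 * √(r * N) ≤ 2 * √(2 ^ d * N ^ ((1 : ℝ) - 1 / 2 ^ d) * N) := by gcongr
    _ = 2 * √(2 ^ d) * N ^ ((1 : ℝ) - 1 / 2 ^ (d + 1)) := by
      rw [mul_assoc, hexp, Real.sqrt_mul (by positivity), Real.sqrt_sq (by positivity), mul_assoc]
    _ ≤ 2 * 2 ^ d * N ^ ((1 : ℝ) - 1 / 2 ^ (d + 1)) := by gcongr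
    _ = 2 ^ (d + 1) * N ^ ((1 : ℝ) - 1 / 2 ^ (d + 1)) := by ring

lemma Finset.exists_finpartition_card_le_two_mul_sqrt_sub_one {α : Type*} [DecidableEq α]
    (p : Finset α → Prop) (h : ∀ C : Finset α, C.Nonempty → ∃ B ⊆ C, p B ∧ #C ≤ #B ^ 2)
    {C : Finset α} (hC : C.Nonempty) :
    ∃ R : Finpartition C, (∀ B ∈ R.parts, p B) ∧ (#R.parts : ℝ) ≤ 2 * √(#C) - 1 := by
  induction C using Finset.strongInduction with
  | H C ih =>
    obtain ⟨B, hBC, hpB, hCB⟩ := h C hC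
    have hB : B.Nonempty :=
      card_pos.1 <| Nat.pos_of_ne_zero fun h0 => hC.card_pos.ne' (by simpa [h0] using hCB)
    have hC1 : (1 : ℝ) ≤ #C := by exact_mod_cast hC.card_pos
    obtain hempty | hrest := (C \ B).eq_empty_or_nonempty
    · obtain rfl : B = C := hBC.antisymm (sdiff_eq_empty_iff_subset.1 hempty)
      refine ⟨Finpartition.indiscrete hC.ne_empty, by simpa using hpB, ?_⟩
      have : (1 : ℝ) ≤ √(#B) := Real.one_le_sqrt.2 hC1
      simp only [Finpartition.indiscrete_parts, card_singleton, Nat.cast_one]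
      linarith
    obtain ⟨R, hR, hRcard⟩ := ih (C \ B) (sdiff_ssubset hBC hB) hrest
    refine ⟨R.extend hB.ne_empty sdiff_disjoint (sdiff_union_of_subset hBC), ?_, ?_⟩
    · simp only [Finpartition.extend_parts, mem_insert, forall_eq_or_imp]
      exact ⟨hpB, hR⟩
    · have hsq : (#C : ℝ) ≤ (#B : ℝ) ^ 2 := by exact_mod_cast hCB
      have := two_mul_sqrt_sub_add_one_le (by linarith) (Nat.cast_nonneg _) hsq
      rw [Finpartition.card_extend, Nat.cast_succ]
      rw [card_sdiff_of_subset hBC, Nat.cast_sub (card_le_card hBC)] at hRcard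
      linarith

lemma Finpartition.sum_card_inter {α : Type*} [DecidableEq α] {s : Finset α}
    (P : Finpartition s) {t : Finset α} (ht : t ⊆ s) : ∑ u ∈ P.parts, #(u ∩ t) = #t := by
  rw [← (P.restrict ht).sum_card_parts, P.sum_restrict _ _ card_empty]
  rfl

section RefinementChain

variable {α : Type*} [Fintype α] [DecidableEq α]

lemma RestrRefines.mono {P P' : Finpartition (univ : Finset α)} {B C : Finset α}
    (h : RestrRefines P P' C) (hBC : B ⊆ C) : RestrRefines P P' B := by
  intro Y hY ⟨x, hx⟩
  obtain ⟨Z, hZ, hYZ⟩ := h Y hY ⟨x, inter_subset_inter_left hBC hx⟩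
  refine ⟨Z, hZ, fun a ha => ?_⟩
  have haB := (mem_inter.1 ha).2
  exact mem_inter.2 ⟨(mem_inter.1 (hYZ (inter_subset_inter_left hBC ha))).1, haB⟩

lemma restrRefines_of_subset_mem_parts (P : Finpartition (univ : Finset α))
    {P' : Finpartition (univ : Finset α)} {w B : Finset α} (hw : w ∈ P'.parts) (hB : B ⊆ w) :
    RestrRefines P P' B :=
  fun _ _ _ => ⟨w, hw, fun _ ha => mem_inter.2 ⟨hB (mem_inter.1 ha).2, (mem_inter.1 ha).2⟩⟩

lemma exists_sq_card_ge_subset_mem_parts_or_restrRefines (W Y : Finpartition (univ : Finset α))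
    {C : Finset α} (hC : C.Nonempty) :
    ∃ B ⊆ C, ((∃ w ∈ W.parts, B ⊆ w) ∨ RestrRefines W Y B) ∧ #C ≤ #B ^ 2 := by
  have huniv : (univ : Finset α) ≠ ∅ := (univ_nonempty_iff.2 ⟨hC.choose⟩).ne_empty
  choose g hgY hg using fun w => Y.parts.exists_max_image (fun y => #(w ∩ y ∩ C))
    (Y.parts_nonempty huniv)
  obtain ⟨w₀, hw₀, hw₀max⟩ :=
    W.parts.exists_max_image (fun w => #(w ∩ C)) (W.parts_nonempty huniv)
  set B₁ := w₀ ∩ C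
  set B₂ := W.parts.biUnion fun w => w ∩ g w ∩ C
  have hB₂card : #B₂ = ∑ w ∈ W.parts, #(w ∩ g w ∩ C) :=
    card_biUnion fun w hw w' hw' hne =>
      (W.disjoint hw hw' hne).mono (inter_subset_left.trans inter_subset_left)
        (inter_subset_left.trans inter_subset_left)
  have hB₂refines : RestrRefines W Y B₂ := by
    intro w hw _
    refine ⟨g w, hgY w, fun a ha => mem_inter.2 ⟨?_, (mem_inter.1 ha).2⟩⟩
    obtain ⟨haw, haB₂⟩ := mem_inter.1 ha
    obtain ⟨w', hw', haw'⟩ := mem_biUnion.1 haB₂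
    rw [W.eq_of_mem_parts hw hw' haw (mem_inter.1 (mem_inter.1 haw').1).1]
    exact (mem_inter.1 (mem_inter.1 haw').1).2
  -- a nonempty trace `w ∩ C` has at most `#B₁` points and contributes at least one point to `B₂`
  have hrow : ∀ w ∈ W.parts, #(w ∩ C) ≤ #B₁ * #(w ∩ g w ∩ C) := by
    intro w hw
    obtain hempty | ⟨x, hx⟩ := (w ∩ C).eq_empty_or_nonempty
    · simp [hempty]
    obtain ⟨y, hy, hxy⟩ := Y.exists_mem (mem_univ x)
    have hxg : 0 < #(w ∩ g w ∩ C) := (card_pos.2 ⟨x, by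
      simp only [mem_inter] at hx ⊢; exact ⟨⟨hx.1, hxy⟩, hx.2⟩⟩).trans_le (hg w y hy)
    calc #(w ∩ C) ≤ #B₁ := hw₀max w hw
      _ ≤ #B₁ * #(w ∩ g w ∩ C) := Nat.le_mul_of_pos_right _ hxg
  have hC_le : #C ≤ #B₁ * #B₂ := by
    rw [← W.sum_card_inter (subset_univ C), hB₂card, mul_sum]
    exact sum_le_sum hrow
  rcases le_total #B₁ #B₂ with h | h
  · exact ⟨B₂, biUnion_subset.2 fun w _ => inter_subset_right, Or.inr hB₂refines,
      hC_le.trans (by rw [sq]; gcongr)⟩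
  · exact ⟨B₁, inter_subset_right, Or.inl ⟨w₀, hw₀, inter_subset_left⟩,
      hC_le.trans (by rw [sq]; gcongr)⟩

def HasRefinementChainOn {c : ℕ} (P : Fin c → Finpartition (univ : Finset α)) (B : Finset α) :
    Prop :=
  ∃ l : List (Fin c), l.Perm (List.finRange c) ∧ l.IsChain fun i j => RestrRefines (P i) (P j) B

variable {c : ℕ}

lemma hasRefinementChainOn_of_subset_mem_parts_zero
    {P : Fin (c + 1) → Finpartition (univ : Finset α)} {B w : Finset α} {l : List (Fin c)}
    (hl : l.Perm (List.finRange c))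
    (hchain : l.IsChain fun i j => RestrRefines (P i.succ) (P j.succ) B)
    (hw : w ∈ (P 0).parts) (hB : B ⊆ w) : HasRefinementChainOn P B := by
  refine ⟨l.map Fin.succ ++ [0], ?_, ?_⟩
  · rw [List.finRange_succ]
    exact (List.perm_append_singleton _ _).trans ((hl.map _).cons _)
  · rw [List.isChain_append, List.isChain_map]
    refine ⟨hchain, List.isChain_singleton _, fun i _ j hj => ?_⟩
    rw [List.head?_cons, Option.mem_some_iff] at hj
    exact hj ▸ restrRefines_of_subset_mem_parts _ hw hB

lemma hasRefinementChainOn_of_restrRefines_zero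
    {P : Fin (c + 1) → Finpartition (univ : Finset α)} {B : Finset α} {j : Fin c}
    {l : List (Fin c)} (hl : (j :: l).Perm (List.finRange c))
    (hchain : (j :: l).IsChain fun i j => RestrRefines (P i.succ) (P j.succ) B)
    (h0 : RestrRefines (P 0) (P j.succ) B) : HasRefinementChainOn P B := by
  refine ⟨0 :: (j :: l).map Fin.succ, ?_, ?_⟩
  · rw [List.finRange_succ]
    exact (hl.map _).cons 0
  · rw [List.map_cons, List.isChain_cons_cons, ← List.map_cons, List.isChain_map]
    exact ⟨h0, hchain⟩

lemma HasRefinementChainOn.exists_perm {P : Fin c → Finpartition (univ : Finset α)}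
    {B : Finset α} (h : HasRefinementChainOn P B) :
    ∃ σ : Equiv.Perm (Fin c), ∀ (i : ℕ) (h : i + 1 < c),
      RestrRefines (P (σ ⟨i, Nat.lt_of_succ_lt h⟩)) (P (σ ⟨i + 1, h⟩)) B := by
  obtain ⟨l, hl, hchain⟩ := h
  have hlen : l.length = c := hl.length_eq.trans List.length_finRange
  have hnodup : l.Nodup := hl.nodup_iff.2 (List.nodup_finRange c)
  refine ⟨(finCongr hlen.symm).trans (hnodup.getEquivOfForallMemList l
    fun i => hl.mem_iff.2 (List.mem_finRange i)), fun i hi => ?_⟩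
  exact List.isChain_iff_getElem.1 hchain i (by rwa [hlen])

lemma exists_finpartition_hasRefinementChainOn_of_tail
    (P : Fin (c + 2) → Finpartition (univ : Finset α)) {C : Finset α} (hC : C.Nonempty)
    (hchain : HasRefinementChainOn (fun i => P i.succ) C) :
    ∃ R : Finpartition C, (∀ B ∈ R.parts, HasRefinementChainOn P B) ∧
      (#R.parts : ℝ) ≤ 2 * √(#C) - 1 := by
  obtain ⟨_ | ⟨j, l⟩, hl, hchain⟩ := hchain
  · simpa using hl.length_eq
  obtain ⟨R, hR, hcard⟩ := exists_finpartition_card_le_two_mul_sqrt_sub_one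
    (fun B => (∃ w ∈ (P 0).parts, B ⊆ w) ∨ RestrRefines (P 0) (P j.succ) B)
    (fun _ => exists_sq_card_ge_subset_mem_parts_or_restrRefines (P 0) (P j.succ)) hC
  refine ⟨R, fun B hB => ?_, hcard⟩
  have hchainB := hchain.imp fun _ _ h => RestrRefines.mono h (R.le hB)
  rcases hR B hB with ⟨w, hw, hBw⟩ | h0
  · exact hasRefinementChainOn_of_subset_mem_parts_zero hl hchainB hw hBw
  · exact hasRefinementChainOn_of_restrRefines_zero hl hchainB h0

lemma exists_finpartition_hasRefinementChainOn_of_tail_finpartition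
    (P : Fin (c + 2) → Finpartition (univ : Finset α)) (Q : Finpartition (univ : Finset α))
    (hQ : ∀ C ∈ Q.parts, HasRefinementChainOn (fun i => P i.succ) C) :
    ∃ R : Finpartition (univ : Finset α), (∀ B ∈ R.parts, HasRefinementChainOn P B) ∧
      (#R.parts : ℝ) ≤ 2 * √(#Q.parts * Fintype.card α) - #Q.parts := by
  choose R hR hRcard using fun C hC =>
    exists_finpartition_hasRefinementChainOn_of_tail P (Q.nonempty_of_mem_parts hC) (hQ C hC)
  refine ⟨Q.bind R, fun B hB => ?_, ?_⟩
  · obtain ⟨C, hC, hBC⟩ := Q.mem_bind.1 hB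
    exact hR C hC B hBC
  calc (#(Q.bind R).parts : ℝ) = ∑ C ∈ Q.parts.attach, (#(R C.1 C.2).parts : ℝ) := by
        rw [Finpartition.card_bind]; push_cast; rfl
    _ ≤ ∑ C ∈ Q.parts.attach, (2 * √(#C.1) - 1) := sum_le_sum fun C _ => hRcard C.1 C.2
    _ = 2 * ∑ C ∈ Q.parts, √(#C) - #Q.parts := by
        rw [sum_attach Q.parts fun C => 2 * √(#C) - 1, sum_sub_distrib, ← mul_sum]
        simp
    _ ≤ 2 * √(#Q.parts * ∑ C ∈ Q.parts, (#C : ℝ)) - #Q.parts := by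
        gcongr
        exact Real.sum_sqrt_le_sqrt_card_mul_sum _ fun _ => Nat.cast_nonneg _
    _ = 2 * √(#Q.parts * Fintype.card α) - #Q.parts := by
        rw [← Nat.cast_sum, Q.sum_card_parts, card_univ]

lemma exists_finpartition_hasRefinementChainOn (d : ℕ)
    (P : Fin (d + 1) → Finpartition (univ : Finset α)) :
    ∃ Q : Finpartition (univ : Finset α), (∀ B ∈ Q.parts, HasRefinementChainOn P B) ∧
      (#Q.parts : ℝ) ≤ 2 ^ d * (Fintype.card α : ℝ) ^ ((1 : ℝ) - 1 / 2 ^ d) := by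
  induction d with
  | zero =>
    refine ⟨⊤, fun B _ => ⟨[0], by decide, List.isChain_singleton _⟩, ?_⟩
    have : #(⊤ : Finpartition (univ : Finset α)).parts ≤ 1 :=
      (card_le_card (Finpartition.parts_top_subset _)).trans_eq (card_singleton _)
    simpa using this
  | succ d ih =>
    obtain ⟨Q, hQ, hQcard⟩ := ih fun i => P i.succ
    obtain ⟨R, hR, hRcard⟩ := exists_finpartition_hasRefinementChainOn_of_tail_finpartition P Q hQ
    refine ⟨R, hR, ?_⟩
    have hbound := two_mul_sqrt_mul_le_two_pow_succ_mul_rpow d (Nat.cast_nonneg _) hQcard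
    have hQ_nonneg : (0 : ℝ) ≤ #Q.parts := Nat.cast_nonneg _
    linarith

end RefinementChain

/-- Any `c ≥ 2` partitions of an `n`-element set admit a common partition into fewer than
`2^{c-1}·n^{1-1/2^{c-1}}` blocks on each of which the `c` restricted partitions form a
refinement chain under some permutation. -/
theorem c_partitions_base_sets (α : Type*) [Fintype α] [DecidableEq α] (n c : ℕ)
    (hn : 1 ≤ n) (hc : 2 ≤ c) (hcard : Fintype.card α = n)
    (P : Fin c → Finpartition (Finset.univ : Finset α)) :
    ∃ Q : Finpartition (Finset.univ : Finset α),
      (Q.parts.card : ℝ) < 2 ^ (c - 1) * (n : ℝ) ^ ((1 : ℝ) - 1 / 2 ^ (c - 1)) ∧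
      ∀ B ∈ Q.parts, ∃ σ : Equiv.Perm (Fin c),
        ∀ (i : ℕ) (h : i + 1 < c),
          RestrRefines (P (σ ⟨i, Nat.lt_of_succ_lt h⟩)) (P (σ ⟨i + 1, h⟩)) B := by
  obtain ⟨d, rfl⟩ : ∃ d, c = d + 2 := ⟨c - 2, by omega⟩
  subst hcard
  obtain ⟨Q, hQ, hQcard⟩ := exists_finpartition_hasRefinementChainOn d fun i => P i.succ
  obtain ⟨R, hR, hRcard⟩ := exists_finpartition_hasRefinementChainOn_of_tail_finpartition P Q hQ
  have hQ_pos : (1 : ℝ) ≤ #Q.parts := by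
    have hα : (univ : Finset α).Nonempty := univ_nonempty_iff.2 (Fintype.card_pos_iff.1 hn)
    exact_mod_cast (Q.parts_nonempty hα.ne_empty).card_pos
  have hbound := two_mul_sqrt_mul_le_two_pow_succ_mul_rpow d (Nat.cast_nonneg _) hQcard
  exact ⟨R, by rw [Nat.add_succ_sub_one]; linarith, fun B hB => (hR B hB).exists_perm⟩
end

section
/- Assume each constant-term matrix D_{i,0} (the entrywise coefficient of the constant monomial in D_i) is invertible in F^{w×w}. Then the matrix product D = D_1·D_2⋯D_d has w²-block-support concentration: for every exponent vector e, the coefficient D_e lies in the F-span of {D_f : bs(f) ≤ w² - 1}. -/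
open Finset

/-- The block-support `bS(e)` of an exponent vector `e`: the set of blocks `i` (under the
block assignment `π` of variables to blocks) on which `e` is not identically zero. -/
def blockSupport {n d : ℕ} (π : Fin n → Fin d) (e : Fin n → ℕ) : Finset (Fin d) :=
  Finset.univ.filter fun i => ∃ j, π j = i ∧ e j ≠ 0

/-- The monomial `x_i^{e_i}`: the restriction of the exponent vector `e` to block `i`. -/
noncomputable def blockMonomial {n d : ℕ} (π : Fin n → Fin d) (i : Fin d)
    (e : Fin n → ℕ) : Fin n →₀ ℕ :=
  Finsupp.equivFunOnFinite.symm fun j => if π j = i then e j else 0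

/-- `D_e = D_{1,e_1}·D_{2,e_2}⋯D_{d,e_d}`, the coefficient of `x^e` in the matrix product
`D_1·D_2⋯D_d` (the variable sets of the factors being disjoint). -/
noncomputable def blockCoeff {F : Type*} [Field F] {w n d : ℕ} (π : Fin n → Fin d)
    (D : Fin d → Matrix (Fin w) (Fin w) (MvPolynomial (Fin n) F)) (e : Fin n → ℕ) :
    Matrix (Fin w) (Fin w) F :=
  ((List.finRange d).map fun i =>
    (D i).map (MvPolynomial.coeff (blockMonomial π i e))).prod

/-!
For a set `T` of blocks let `P(T)` be the product `D_e` with every factor `D_{i,e_i}`, `i ∉ T`,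
replaced by the constant term `D_{i,0}`; then `D_e = P(bS(e))`, and `P(T)` is itself a coefficient
`D_f` with `bS(f) ⊆ T`. If `|T| ≥ w²`, cut `[d]` just before each of the first `w²` elements of `T`
and at the end. The `w² + 1` matrices `P(T ∩ [0, c))` for these cuts `c` cannot be independent in
the `w²`-dimensional space `F^{w×w}`, so one of them, at a cut `c`, is a combination of those at
earlier cuts `c'`. Multiplying on the right by `(∏_{i ≥ c} D_{i,0})⁻¹ ∏_{i ≥ c} D_{i,e_i}` sends
`P(T ∩ [0, c))` to `P(T)` and `P(T ∩ [0, c'))` to `P(T ∖ [c', c))`, where `T ∖ [c', c) ⊊ T`.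
Induction on `|T|` concludes.
-/

theorem exists_le_finrank_mem_span_image_Iio (K : Type*) {V : Type*} [DivisionRing K]
    [AddCommGroup V] [Module K V] [FiniteDimensional K V] (v : ℕ → V) :
    ∃ k ≤ Module.finrank K V, v k ∈ Submodule.span K (v '' Set.Iio k) := by
  by_contra! h
  have finrank_span_ge : ∀ k ≤ Module.finrank K V + 1,
      k ≤ Module.finrank K (Submodule.span K (v '' Set.Iio k)) := by
    intro k
    induction k with
    | zero => simp
    | succ k ih =>
      intro hk
      have hlt : Submodule.span K (v '' Set.Iio k) < Submodule.span K (v '' Set.Iio (k + 1)) :=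
        SetLike.lt_iff_le_and_exists.mpr
          ⟨Submodule.span_mono (Set.image_mono (Set.Iio_subset_Iio k.le_succ)),
            v k, Submodule.subset_span ⟨k, k.lt_succ_self, rfl⟩, h k (by omega)⟩
      have := Submodule.finrank_lt_finrank_of_lt hlt
      have := ih (by omega)
      omega
  have := finrank_span_ge _ le_rfl
  have := Submodule.finrank_le (Submodule.span K (v '' Set.Iio (Module.finrank K V + 1)))
  omega

theorem Finset.exists_cuts_separated {m : ℕ} (T : Finset (Fin m)) :
    ∃ c : ℕ → ℕ, ∀ j k, j < k → k ≤ #T → ∃ t ∈ T, c j ≤ t ∧ (t : ℕ) < c k := by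
  refine ⟨fun j => if h : j < #T then T.orderEmbOfFin rfl ⟨j, h⟩ else m, fun j k hjk hk => ?_⟩
  have hj : j < #T := hjk.trans_le hk
  refine ⟨T.orderEmbOfFin rfl ⟨j, hj⟩, T.orderEmbOfFin_mem rfl _, by simp [hj], ?_⟩
  by_cases hk' : k < #T
  · simp only [dif_pos hk']
    exact (T.orderEmbOfFin rfl).strictMono (Fin.mk_lt_mk.mpr hjk)
  · simp [hk']

theorem List.take_ofFn_congr {α : Type*} {m c : ℕ} {x y : Fin m → α}
    (h : ∀ i : Fin m, (i : ℕ) < c → x i = y i) : (List.ofFn x).take c = (List.ofFn y).take c := by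
  apply List.ext_getElem (by simp)
  intro j hx hy
  simp only [List.getElem_take, List.getElem_ofFn]
  exact h _ (lt_min_iff.mp (List.length_take ▸ hx)).1

theorem List.drop_ofFn_congr {α : Type*} {m c : ℕ} {x y : Fin m → α}
    (h : ∀ i : Fin m, c ≤ (i : ℕ) → x i = y i) : (List.ofFn x).drop c = (List.ofFn y).drop c := by
  apply List.ext_getElem (by simp)
  intro j hx hy
  simp only [List.getElem_drop, List.getElem_ofFn]
  exact h _ (by simp)

section piecewiseProd

variable {F A : Type*} [Field F] [Ring A] [Algebra F A] {m : ℕ} (M N : Fin m → A)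

def piecewiseProd (T : Finset (Fin m)) : A :=
  (List.ofFn (T.piecewise M N)).prod

variable {M N}

theorem exists_piecewiseProd_mul_eq (hN : ∀ i, IsUnit (N i)) (T : Finset (Fin m)) (c : ℕ) :
    ∃ Y : A, ∀ S : Finset (Fin m), (∀ i ∈ S, (i : ℕ) < c) →
      piecewiseProd M N S * Y = piecewiseProd M N (S ∪ {i ∈ T | c ≤ (i : ℕ)}) := by
  have hU : IsUnit ((List.ofFn N).drop c).prod := List.prod_isUnit fun x hx => by
    obtain ⟨i, rfl⟩ := List.mem_ofFn.mp (List.mem_of_mem_drop hx)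
    exact hN i
  refine ⟨↑hU.unit⁻¹ * ((List.ofFn (T.piecewise M N)).drop c).prod, fun S hS => ?_⟩
  set S' := S ∪ {i ∈ T | c ≤ (i : ℕ)}
  have hpre : (List.ofFn (S.piecewise M N)).take c = (List.ofFn (S'.piecewise M N)).take c :=
    List.take_ofFn_congr fun i hi => by
      have : ¬ c ≤ (i : ℕ) := by omega
      simp [S', Finset.piecewise, this]
  have hsufS : (List.ofFn (S.piecewise M N)).drop c = (List.ofFn N).drop c :=
    List.drop_ofFn_congr fun i hi => Finset.piecewise_eq_of_notMem _ _ _ fun hiS => by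
      have := hS i hiS; omega
  have hsufT : (List.ofFn (T.piecewise M N)).drop c = (List.ofFn (S'.piecewise M N)).drop c :=
    List.drop_ofFn_congr fun i hi => by
      have : i ∉ S := fun hiS => by have := hS i hiS; omega
      simp [S', Finset.piecewise, hi, this]
  rw [piecewiseProd, piecewiseProd, ← List.prod_take_mul_prod_drop _ c,
    ← List.prod_take_mul_prod_drop (List.ofFn (S'.piecewise M N)) c, hpre, hsufS, hsufT,
    mul_assoc, ← mul_assoc (List.drop c (List.ofFn N)).prod, hU.mul_val_inv, one_mul]

theorem piecewiseProd_mem_span_ssubset [FiniteDimensional F A] (hN : ∀ i, IsUnit (N i))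
    {T : Finset (Fin m)} (hT : Module.finrank F A ≤ #T) :
    piecewiseProd M N T ∈ Submodule.span F {x | ∃ T' ⊂ T, x = piecewiseProd M N T'} := by
  obtain ⟨c, hc⟩ := T.exists_cuts_separated
  set prefixProd := fun j => piecewiseProd M N {i ∈ T | (i : ℕ) < c j}
  obtain ⟨k, hk, hk_span⟩ := exists_le_finrank_mem_span_image_Iio F prefixProd
  obtain ⟨Y, hY⟩ := exists_piecewiseProd_mul_eq hN T (c k)
  have hT_eq : piecewiseProd M N T = prefixProd k * Y := by
    rw [hY _ fun i hi => (Finset.mem_filter.mp hi).2, Finset.filter_union_filter_of_codisjoint _ _ T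
      (codisjoint_iff_le_sup.mpr fun i _ => lt_or_ge (i : ℕ) (c k))]
  have hmap := Submodule.mem_map_of_mem (f := LinearMap.mulRight F Y) hk_span
  rw [Submodule.map_span, ← Set.image_comp] at hmap
  rw [hT_eq]
  refine Submodule.span_mono ?_ hmap
  rintro _ ⟨j, hj, rfl⟩
  obtain ⟨t, htT, hjt, htk⟩ := hc j k hj (hk.trans hT)
  have hj_below : ∀ i ∈ ({i ∈ T | (i : ℕ) < c j} : Finset (Fin m)), (i : ℕ) < c k := fun i hi => by
    have := (Finset.mem_filter.mp hi).2; omega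
  refine ⟨_, ?_, hY _ hj_below⟩
  refine (Finset.ssubset_iff_of_subset ?_).mpr ⟨t, htT, ?_⟩
  · exact Finset.union_subset (Finset.filter_subset _ _) (Finset.filter_subset _ _)
  · simp only [Finset.mem_union, Finset.mem_filter, not_or, not_and]
    omega

theorem piecewiseProd_mem_span_card_lt [FiniteDimensional F A] (hN : ∀ i, IsUnit (N i))
    (T : Finset (Fin m)) :
    piecewiseProd M N T ∈
      Submodule.span F {x | ∃ T' : Finset (Fin m), #T' < Module.finrank F A ∧
        x = piecewiseProd M N T'} := by
  induction T using Finset.strongInduction with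
  | H T ih =>
    by_cases hT : #T < Module.finrank F A
    · exact Submodule.subset_span ⟨T, hT, rfl⟩
    refine Submodule.span_le.mpr ?_ (piecewiseProd_mem_span_ssubset hN (not_lt.mp hT))
    rintro _ ⟨T', hT', rfl⟩
    exact ih T' hT'

end piecewiseProd

section blocks

variable {F : Type*} [Field F] {w n d : ℕ} (π : Fin n → Fin d)

def restrictBlocks (e : Fin n → ℕ) (T : Finset (Fin d)) : Fin n → ℕ :=
  fun j => if π j ∈ T then e j else 0

theorem restrictBlocks_blockSupport (e : Fin n → ℕ) :
    restrictBlocks π e (blockSupport π e) = e := by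
  funext j
  by_cases hj : e j = 0
  · simp [restrictBlocks, hj]
  · exact if_pos (Finset.mem_filter.mpr ⟨Finset.mem_univ _, j, rfl, hj⟩)

theorem blockSupport_restrictBlocks_subset (e : Fin n → ℕ) (T : Finset (Fin d)) :
    blockSupport π (restrictBlocks π e T) ⊆ T := by
  intro i hi
  obtain ⟨j, rfl, hj⟩ := (Finset.mem_filter.mp hi).2
  by_contra hjT
  exact hj (if_neg hjT)

theorem blockMonomial_restrictBlocks (e : Fin n → ℕ) (T : Finset (Fin d)) (i : Fin d) :
    blockMonomial π i (restrictBlocks π e T) = if i ∈ T then blockMonomial π i e else 0 := by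
  ext j
  by_cases hj : π j = i
  · subst hj
    split_ifs <;> simp [blockMonomial, restrictBlocks, *]
  · split_ifs <;> simp [blockMonomial, hj]

theorem blockCoeff_restrictBlocks (D : Fin d → Matrix (Fin w) (Fin w) (MvPolynomial (Fin n) F))
    (e : Fin n → ℕ) (T : Finset (Fin d)) :
    blockCoeff π D (restrictBlocks π e T) =
      piecewiseProd (fun i => (D i).map (MvPolynomial.coeff (blockMonomial π i e)))
        (fun i => (D i).map (MvPolynomial.coeff 0)) T := by
  rw [blockCoeff, piecewiseProd, List.ofFn_eq_map]
  congr 2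
  funext i
  rw [blockMonomial_restrictBlocks, Finset.piecewise]
  split_ifs <;> rfl

end blocks

theorem block_support_concentration_general (F : Type*) [Field F] (w n d : ℕ)
    (π : Fin n → Fin d)
    (D : Fin d → Matrix (Fin w) (Fin w) (MvPolynomial (Fin n) F))
    (hinv : ∀ i, IsUnit ((D i).map (MvPolynomial.coeff (0 : Fin n →₀ ℕ)))) :
    ∀ e : Fin n → ℕ, blockCoeff π D e ∈ Submodule.span F
      {M | ∃ f, (blockSupport π f).card ≤ w ^ 2 - 1 ∧ M = blockCoeff π D f} := by
  intro e
  rw [← restrictBlocks_blockSupport π e, blockCoeff_restrictBlocks]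
  refine Submodule.span_mono ?_ (piecewiseProd_mem_span_card_lt hinv _)
  rintro _ ⟨T, hT, rfl⟩
  refine ⟨restrictBlocks π e T, ?_, (blockCoeff_restrictBlocks π D e T).symm⟩
  have hsub := Finset.card_le_card (blockSupport_restrictBlocks_subset π e T)
  rw [Module.finrank_matrix, Fintype.card_fin, Module.finrank_self, mul_one] at hT
  rw [sq]
  omega

/-- `w²`-block-support concentration: if all constant-term matrices `D_{i,0}` are
invertible, then every coefficient of the matrix product `D = D_1·D_2⋯D_d` lies in the span
of the coefficients of monomials of block-support size at most `w² - 1`. -/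
theorem block_support_concentration (F : Type*) [Field F] (w n d : ℕ)
    (hw : 1 ≤ w) (hd : 1 ≤ d) (π : Fin n → Fin d)
    (D : Fin d → Matrix (Fin w) (Fin w) (MvPolynomial (Fin n) F))
    (hvars : ∀ i a b, ∀ j ∈ (D i a b).vars, π j = i)
    (hinv : ∀ i, IsUnit ((D i).map (MvPolynomial.coeff (0 : Fin n →₀ ℕ)))) :
    ∀ e : Fin n → ℕ, blockCoeff π D e ∈ Submodule.span F
      {M | ∃ f, (blockSupport π f).card ≤ w ^ 2 - 1 ∧ M = blockCoeff π D f} :=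
  block_support_concentration_general F w n d π D hinv
end
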